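/- The commutative square with corners R, R_f, R̂, R̂_f (maps: localization R → R_f, completion ι : R → R̂, and the canonical maps R_f → R̂_f and R̂ → R̂_f) is Cartesian: the induced ring homomorphism from R to the fiber product R_f ×_{R̂_f} R̂ = {(a, b) ∈ R_f × R̂ : a and b have the same image in R̂_f} is an isomorphism. -/

import Mathlib

/-!
Write `a ∈ R_f` as `r / f ^ n`. If `a` and `b ∈ R̂` agree in `R̂_f`, then, since `ι f` is a
nonzerodivisor of `R̂`, already `ι r = ι f ^ n * b` in `R̂`. Reducing modulo `f ^ n` gives
`f ^ n ∣ r` in `R`, say `r = f ^ n * t`, and `t` is the common preimage of `a` and `b`.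
Injectivity is that of `R → R_f`.
-/

noncomputable section

variable (R : Type*) [CommRing R] (f : R)

/-- The `(f)`-adic completion `R̂` of `R`. -/
abbrev Rhat : Type _ := AdicCompletion (Ideal.span {f}) R

/-- The localization `R_f = R[f⁻¹]`. -/
abbrev Rf : Type _ := Localization.Away f

/-- The localization `R̂_f = R̂[ι(f)⁻¹]`. -/
abbrev Rhatf : Type _ := Localization.Away (algebraMap R (Rhat R f) f)

/-- The canonical ring map `R_f → R̂_f` extending `ι : R → R̂`. -/
noncomputable def psi : Rf R f →+* Rhatf R f :=
  Localization.awayMap (algebraMap R (Rhat R f)) f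

section

variable {R f}

theorem Ideal.Quotient.mk_span_singleton_pow_eq_zero_iff (n : ℕ) (x : R) :
    Ideal.Quotient.mk (Ideal.span {f} ^ n) x = 0 ↔ f ^ n ∣ x := by
  rw [Ideal.Quotient.eq_zero_iff_mem, Ideal.span_singleton_pow, Ideal.mem_span_singleton]

namespace AdicCompletion

theorem pow_dvd_of_algebraMap_pow_dvd {n : ℕ} {r : R}
    (h : algebraMap R (AdicCompletion (Ideal.span {f}) R) f ^ n ∣
      algebraMap R (AdicCompletion (Ideal.span {f}) R) r) :
    f ^ n ∣ r := by
  obtain ⟨b, hb⟩ := h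
  have hb_mod := congrArg (evalₐ (Ideal.span {f}) n) hb
  rw [map_mul, map_pow, AlgHom.commutes, AlgHom.commutes, Ideal.Quotient.algebraMap_eq,
    ← map_pow, (Ideal.Quotient.mk_span_singleton_pow_eq_zero_iff n _).mpr dvd_rfl,
    zero_mul] at hb_mod
  exact (Ideal.Quotient.mk_span_singleton_pow_eq_zero_iff n r).mp hb_mod

theorem algebraMap_mem_nonZeroDivisors (hf : f ∈ nonZeroDivisors R) :
    algebraMap R (AdicCompletion (Ideal.span {f}) R) f ∈
      nonZeroDivisors (AdicCompletion (Ideal.span {f}) R) := by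
  rw [mem_nonZeroDivisors_iff_right]
  intro b hb
  obtain ⟨x, rfl⟩ := mk_surjective (Ideal.span {f}) R b
  refine ext_evalₐ fun n ↦ ?_
  have hx : f ^ n * f ∣ x.val (n + 1) * f := by
    rw [← pow_succ, ← Ideal.Quotient.mk_span_singleton_pow_eq_zero_iff]
    simpa using congrArg (evalₐ (Ideal.span {f}) (n + 1)) hb
  rw [evalₐ_mk, _root_.map_zero]
  -- `x n ≡ x (n + 1) [mod f ^ n]`, and `f ^ n ∣ x (n + 1)` after cancelling `f`
  exact (Ideal.mk_eq_mk _ (Nat.le_succ n) x).symm.trans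
    ((Ideal.Quotient.mk_span_singleton_pow_eq_zero_iff n _).mpr
      ((dvd_cancel_right_mem_nonZeroDivisors hf).mp hx))

end AdicCompletion

end

namespace Localization

variable {R} {S : Type*} [CommRing S] (φ : R →+* S)

theorem awayMap_algebraMap (r : R) :
    awayMap φ f (algebraMap R (Away f) r) = algebraMap S (Away (φ f)) (φ r) :=
  IsLocalization.map_eq _ r

theorem exists_algebraMap_eq_of_awayMap_eq (hφf : φ f ∈ nonZeroDivisors S)
    (hdvd : ∀ (n : ℕ) (r : R), φ f ^ n ∣ φ r → f ^ n ∣ r) {a : Away f} {b : S}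
    (h : awayMap φ f a = algebraMap S (Away (φ f)) b) :
    ∃ t : R, algebraMap R (Away f) t = a ∧ φ t = b := by
  obtain ⟨n, r, hr⟩ := IsLocalization.Away.surj f a
  have hφr : φ r = φ f ^ n * b := by
    apply IsLocalization.injective (Away (φ f)) (Submonoid.powers_le.mpr hφf)
    rw [← awayMap_algebraMap, ← hr, map_mul, h, map_pow, awayMap_algebraMap, map_mul,
      map_pow, mul_comm]
  obtain ⟨t, rfl⟩ := hdvd n r ⟨b, hφr⟩
  refine ⟨t, ?_, ?_⟩
  · apply (IsLocalization.Away.algebraMap_pow_isUnit f n).mul_right_cancel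
    rw [hr, map_mul, map_pow, mul_comm]
  · rw [← mul_cancel_left_mem_nonZeroDivisors (pow_mem hφf n), ← hφr, map_mul, map_pow]

end Localization

theorem stmt1 (hf : f ∈ nonZeroDivisors R) :
    Function.Injective
      (fun r : R => ((algebraMap R (Rf R f)) r, (algebraMap R (Rhat R f)) r)) ∧
    Set.range (fun r : R => ((algebraMap R (Rf R f)) r, (algebraMap R (Rhat R f)) r)) =
      {p : Rf R f × Rhat R f | psi R f p.1 = algebraMap (Rhat R f) (Rhatf R f) p.2} := by
  have hinj : Function.Injective (algebraMap R (Rf R f)) :=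
    IsLocalization.injective _ (Submonoid.powers_le.mpr hf)
  refine ⟨fun r s h ↦ hinj (congrArg Prod.fst h), Set.ext fun p ↦ ⟨?_, fun hp ↦ ?_⟩⟩
  · rintro ⟨r, rfl⟩
    exact Localization.awayMap_algebraMap f _ r
  · obtain ⟨t, hta, htb⟩ := Localization.exists_algebraMap_eq_of_awayMap_eq f _
      (AdicCompletion.algebraMap_mem_nonZeroDivisors hf)
      (fun _ _ ↦ AdicCompletion.pow_dvd_of_algebraMap_pow_dvd) hp
    exact ⟨t, Prod.ext hta htb⟩
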